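/- arXiv:math/0502035 — 4 statements merged into one kernel-verified Lean document; each statement's English description precedes it below -/
import Mathlib

section
/- Let $C = s_{12} + s_{13} + \cdots + s_{1n}$ be the sum of transpositions in the group algebra $\mathbb{C}[S_n]$ (a Jucys–Murphy-type element). Then $C$ acts as a scalar on the irreducible representation $\pi_\mu$ of $S_n$ if and only if the Young diagram $\mu$ is a rectangle; and if $\mu$ is a rectangle of height $a$ and width $b$, the scalar is $b - a$. -/
open scoped Classical

noncomputable section

/-- The group algebra `ℂ[S_n]`. -/
abbrev GA (n : ℕ) := MonoidAlgebra ℂ (Equiv.Perm (Fin n))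

/-- A group element viewed in the group algebra. -/
def ga {n : ℕ} (σ : Equiv.Perm (Fin n)) : GA n := MonoidAlgebra.of ℂ _ σ

/-- The row group of a Young tableau `T`: permutations preserving the rows. -/
def rowFinset (μ : YoungDiagram) {n : ℕ} (T : {x : ℕ × ℕ // x ∈ μ.cells} ≃ Fin n) :
    Finset (Equiv.Perm (Fin n)) :=
  Finset.univ.filter fun σ => ∀ k, ((T.symm (σ k)) : ℕ × ℕ).1 = ((T.symm k) : ℕ × ℕ).1

/-- The column group of a Young tableau: permutations preserving the columns. -/
def colFinset (μ : YoungDiagram) {n : ℕ} (T : {x : ℕ × ℕ // x ∈ μ.cells} ≃ Fin n) :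
    Finset (Equiv.Perm (Fin n)) :=
  Finset.univ.filter fun σ => ∀ k, ((T.symm (σ k)) : ℕ × ℕ).2 = ((T.symm k) : ℕ × ℕ).2

/-- The row symmetrizer `a_μ`. -/
def aSym (μ : YoungDiagram) {n : ℕ} (T : {x : ℕ × ℕ // x ∈ μ.cells} ≃ Fin n) : GA n :=
  ∑ σ ∈ rowFinset μ T, ga σ

/-- The signed column symmetrizer `b_μ`. -/
def bSym (μ : YoungDiagram) {n : ℕ} (T : {x : ℕ × ℕ // x ∈ μ.cells} ≃ Fin n) : GA n :=
  ∑ σ ∈ colFinset μ T, ((Equiv.Perm.sign σ : ℤ) : ℂ) • ga σ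

/-- The Young symmetrizer `c_μ = a_μ b_μ`; the irreducible representation `π_μ` is the
left ideal `ℂ[S_n] c_μ`. -/
def cSym (μ : YoungDiagram) {n : ℕ} (T : {x : ℕ × ℕ // x ∈ μ.cells} ≃ Fin n) : GA n :=
  aSym μ T * bSym μ T

/-- The Jucys–Murphy-type element `C = s_{12} + s_{13} + ⋯ + s_{1n}` (with the
distinguished index realized as `0 : Fin n`). -/
def JM (n : ℕ) [NeZero n] : GA n :=
  ∑ m ∈ Finset.univ.filter (fun m : Fin n => m ≠ 0), ga (Equiv.swap 0 m)

/-! Conjugation by `σ` carries `JM n = transpSum 0` to `transpSum (σ⁻¹ 0)`, where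
`transpSum p = ∑_{k ≠ p} (p k)`, so `JM n` is the scalar `z` on the left ideal `ℂ[S_n] c_μ` iff
`transpSum p * c_μ = z c_μ` for every `p`. The coefficient of `transpSum p * c_μ` at `1` is
`rowLen - colLen` at the cell of `p`; constancy of this quantity forces all rows to have equal
length. Conversely, for an `a × b` rectangle, `c_μ` has coefficient `sign κ` at `ρκ ∈ R C` and
`0` elsewhere; `transpSum p * c_μ` takes the value `(b - a) sign κ` at `ρκ` and vanishes off
`R C`, since a pigeonhole argument produces a transposition of `R` fixing `p` whose conjugate by
`g⁻¹` lies in `C`. -/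

open Equiv Finset
open scoped Pointwise

/-- If `c` repeats a value on the row `r = r p`, that row misses a column `j`; the `a` points
of the fibre `c = j` then lie in the `a - 1` other rows, so two of them share both coordinates. -/
theorem injective_pair_of_injOn_compl_singleton {X : Type*} [Fintype X] [DecidableEq X]
    {a b : ℕ} {r c : X → ℕ} (hr : ∀ x, r x < a)
    (hrow : ∀ i < a, #{x | r x = i} = b) (hcol : ∀ j < b, #{x | c x = j} = a) {p : X}
    (hinj : Set.InjOn (fun x => (r x, c x)) {p}ᶜ) : Function.Injective fun x => (r x, c x) := by
  have key : ∀ k, k ≠ p → (r k, c k) ≠ (r p, c p) := by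
    intro k hkp hk
    obtain ⟨hrk, hck⟩ := Prod.ext_iff.1 hk
    set S := image c {x | r x = r p}
    have hS : #S < #(range b) := by
      refine lt_of_le_of_ne (card_image_le.trans (by rw [hrow _ (hr p), card_range])) ?_
      intro h
      rw [card_range, ← hrow _ (hr p), card_image_iff] at h
      exact hkp (h (by simpa using hrk) (by simp) hck)
    obtain ⟨j, hj, hjS⟩ := exists_mem_notMem_of_card_lt_card hS
    have hQrow : ∀ x, c x = j → r x ≠ r p := fun x hx h =>
      hjS (mem_image.2 ⟨x, by simpa using h, hx⟩)
    have hQ : #{x | c x = j} ≤ #((range a).erase (r p)) := by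
      refine card_le_card_of_injOn r (fun x hx => ?_) fun x hx y hy hxy => ?_
      · simp only [coe_filter, mem_univ, true_and, Set.mem_ofPred_eq] at hx
        simpa using ⟨hr x, hQrow x hx⟩
      · simp only [coe_filter, mem_univ, true_and, Set.mem_ofPred_eq] at hx hy
        refine hinj (fun h => hQrow x hx (congrArg r h)) (fun h => hQrow y hy (congrArg r h)) ?_
        exact Prod.ext hxy (hx.trans hy.symm)
    rw [hcol j (mem_range.1 hj), card_erase_of_mem (mem_range.2 (hr p)), card_range] at hQ
    have := hr p
    omega
  intro x y hxy
  by_contra hne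
  rcases eq_or_ne x p with rfl | hx
  · exact key y (Ne.symm hne) hxy.symm
  rcases eq_or_ne y p with rfl | hy
  · exact key x hx hxy
  · exact hne (hinj hx hy hxy)

namespace YoungDiagram

def IsRectangle (μ : YoungDiagram) (a b : ℕ) : Prop :=
  ∀ x : ℕ × ℕ, x ∈ μ ↔ x.1 < a ∧ x.2 < b

variable {μ : YoungDiagram} {a b : ℕ}

theorem IsRectangle.rowLen_eq (hμ : μ.IsRectangle a b) {i : ℕ} (hi : i < a) :
    μ.rowLen i = b :=
  eq_of_forall_lt_iff fun j => by rw [← mem_iff_lt_rowLen, hμ]; simp [hi]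

theorem IsRectangle.colLen_eq (hμ : μ.IsRectangle a b) {j : ℕ} (hj : j < b) :
    μ.colLen j = a :=
  eq_of_forall_lt_iff fun i => by rw [← mem_iff_lt_colLen, hμ]; simp [hj]

theorem isRectangle_of_rowLen_eq (h : ∀ i < μ.colLen 0, μ.rowLen i = μ.rowLen 0) :
    μ.IsRectangle (μ.colLen 0) (μ.rowLen 0) := by
  rintro ⟨i, j⟩
  constructor
  · intro hij
    exact ⟨mem_iff_lt_colLen.1 (μ.up_left_mem le_rfl (Nat.zero_le j) hij),
      mem_iff_lt_rowLen.1 (μ.up_left_mem (Nat.zero_le i) le_rfl hij)⟩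
  · rintro ⟨hi, hj⟩
    exact mem_iff_lt_rowLen.2 (h i hi ▸ hj)

end YoungDiagram

def preservingPerms {α β : Type*} (f : α → β) : Subgroup (Perm α) where
  carrier := {σ | ∀ x, f (σ x) = f x}
  mul_mem' hσ hτ x := (hσ _).trans (hτ x)
  one_mem' _ := rfl
  inv_mem' {σ} hσ x := by simpa using (hσ (σ⁻¹ x)).symm

theorem swap_mem_preservingPerms {α β : Type*} [DecidableEq α] {f : α → β} {u v : α}
    (h : f u = f v) : swap u v ∈ preservingPerms f := by
  intro x
  rcases eq_or_ne x u with rfl | hu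
  · simp [h]
  rcases eq_or_ne x v with rfl | hv
  · simp [h]
  · rw [swap_apply_of_ne_of_ne hu hv]

namespace YoungSymmetrizer

variable {n : ℕ}

theorem ga_mul (σ τ : Perm (Fin n)) : ga (σ * τ) = ga σ * ga τ := map_mul _ σ τ

theorem coeff_ga_mul (σ : Perm (Fin n)) (x : GA n) (g : Perm (Fin n)) :
    (ga σ * x).coeff g = x.coeff (σ⁻¹ * g) := by
  simp [ga]

def transpSum (p : Fin n) : GA n :=
  ∑ k ∈ univ.filter (· ≠ p), ga (swap p k)

theorem coeff_transpSum_mul (p : Fin n) (x : GA n) (g : Perm (Fin n)) :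
    (transpSum p * x).coeff g = ∑ k ∈ univ.filter (· ≠ p), x.coeff (swap p k * g) := by
  simp [transpSum, sum_mul, MonoidAlgebra.coeff_sum, coeff_ga_mul]

theorem transpSum_mul_ga (p : Fin n) (σ : Perm (Fin n)) :
    transpSum p * ga σ = ga σ * transpSum (σ⁻¹ p) := by
  simp only [transpSum, mul_sum, sum_mul, ← ga_mul]
  refine sum_equiv σ⁻¹ (by simp) fun k _ => ?_
  rw [swap_apply_apply, inv_inv, mul_assoc, mul_inv_cancel_left]

theorem JM_eq_transpSum [NeZero n] : JM n = transpSum 0 := rfl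

theorem JM_mul_left_ideal_iff [NeZero n] (x : GA n) (z : ℂ) :
    (∀ y : GA n, JM n * (y * x) = z • (y * x)) ↔ ∀ p, transpSum p * x = z • x := by
  have hconj (σ : Perm (Fin n)) : JM n * ga σ = ga σ * transpSum (σ⁻¹ 0) := by
    rw [JM_eq_transpSum, transpSum_mul_ga]
  constructor
  · intro h p
    have hσ : ga (swap 0 p) * ga (swap 0 p) = 1 := by rw [← ga_mul, swap_mul_self, ga, map_one]
    have h' := h (ga (swap 0 p))
    rw [← mul_assoc, hconj, swap_inv, swap_apply_left, mul_assoc, ← mul_smul_comm] at h'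
    simpa [← mul_assoc, hσ] using congrArg (ga (swap 0 p) * ·) h'
  · intro h y
    induction y using MonoidAlgebra.induction_linear with
    | zero => simp
    | add y₁ y₂ h₁ h₂ => rw [add_mul, mul_add, h₁, h₂, smul_add]
    | single g w =>
      have hg : MonoidAlgebra.single g w = w • ga g := by simp [ga]
      rw [hg, smul_mul_assoc, mul_smul_comm, ← mul_assoc, hconj, mul_assoc, h, mul_smul_comm,
        smul_comm]

section Tableau

variable (μ : YoungDiagram) (T : {x : ℕ × ℕ // x ∈ μ.cells} ≃ Fin n)

def rowOf (k : Fin n) : ℕ := (T.symm k : ℕ × ℕ).1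

def colOf (k : Fin n) : ℕ := (T.symm k : ℕ × ℕ).2

theorem rowOf_colOf_mem (k : Fin n) : (rowOf μ T k, colOf μ T k) ∈ μ :=
  (μ.mem_cells _).1 (T.symm k).2

theorem eq_of_rowOf_eq_of_colOf_eq {k k' : Fin n} (hr : rowOf μ T k = rowOf μ T k')
    (hc : colOf μ T k = colOf μ T k') : k = k' :=
  T.symm.injective (Subtype.ext (Prod.ext hr hc))

theorem mem_rowFinset {σ : Perm (Fin n)} :
    σ ∈ rowFinset μ T ↔ σ ∈ preservingPerms (rowOf μ T) := by
  simp [rowFinset, preservingPerms, rowOf]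

theorem mem_colFinset {σ : Perm (Fin n)} :
    σ ∈ colFinset μ T ↔ σ ∈ preservingPerms (colOf μ T) := by
  simp [colFinset, preservingPerms, colOf]

local notation "R" => preservingPerms (rowOf μ T)
local notation "C" => preservingPerms (colOf μ T)

theorem eq_one_of_mem_row_of_mem_col {σ : Perm (Fin n)} (hr : σ ∈ R) (hc : σ ∈ C) : σ = 1 :=
  Perm.ext fun k => eq_of_rowOf_eq_of_colOf_eq μ T (hr k) (hc k)

theorem coeff_cSym (g : Perm (Fin n)) :
    (cSym μ T).coeff g = ∑ ρ ∈ rowFinset μ T, ∑ κ ∈ colFinset μ T,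
      if ρ * κ = g then ((Perm.sign κ : ℤ) : ℂ) else 0 := by
  simp [cSym, aSym, bSym, sum_mul, mul_sum, ga, MonoidAlgebra.coeff_sum,
    Finsupp.single_apply, sum_comm (s := colFinset μ T)]

theorem coeff_cSym_mul {ρ κ : Perm (Fin n)} (hρ : ρ ∈ R) (hκ : κ ∈ C) :
    (cSym μ T).coeff (ρ * κ) = ((Perm.sign κ : ℤ) : ℂ) := by
  rw [coeff_cSym, sum_eq_single ρ, sum_eq_single κ, if_pos rfl]
  · intro κ' _ hne
    exact if_neg fun h => hne (mul_left_cancel h)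
  · simp [mem_colFinset, hκ]
  · intro ρ' hρ' hne
    refine sum_eq_zero fun κ' hκ' => if_neg fun h => hne ?_
    rw [mem_rowFinset] at hρ'
    rw [mem_colFinset] at hκ'
    have hrc : ρ⁻¹ * ρ' = κ * κ'⁻¹ := by
      rw [inv_mul_eq_iff_eq_mul, ← mul_assoc, eq_mul_inv_iff_mul_eq, h]
    have := eq_one_of_mem_row_of_mem_col μ T (mul_mem (inv_mem hρ) hρ')
      (hrc ▸ mul_mem hκ (inv_mem hκ'))
    rwa [inv_mul_eq_one, eq_comm] at this
  · simp [mem_rowFinset, hρ]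

theorem coeff_cSym_eq_zero {g : Perm (Fin n)} (hg : g ∉ (R : Set (Perm (Fin n))) * C) :
    (cSym μ T).coeff g = 0 := by
  rw [coeff_cSym]
  refine sum_eq_zero fun ρ hρ => sum_eq_zero fun κ hκ => if_neg fun h => hg ?_
  rw [mem_rowFinset] at hρ
  rw [mem_colFinset] at hκ
  exact Set.mem_mul.2 ⟨ρ, hρ, κ, hκ, h⟩

theorem coeff_cSym_row_mul {ρ : Perm (Fin n)} (hρ : ρ ∈ R) (g : Perm (Fin n)) :
    (cSym μ T).coeff (ρ * g) = (cSym μ T).coeff g := by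
  by_cases hg : g ∈ (R : Set (Perm (Fin n))) * C
  · obtain ⟨ρ', hρ', κ, hκ, rfl⟩ := Set.mem_mul.1 hg
    rw [← mul_assoc, coeff_cSym_mul μ T (mul_mem hρ hρ') hκ, coeff_cSym_mul μ T hρ' hκ]
  · refine (coeff_cSym_eq_zero μ T fun h => hg ?_).trans (coeff_cSym_eq_zero μ T hg).symm
    obtain ⟨ρ', hρ', κ, hκ, h⟩ := Set.mem_mul.1 h
    exact Set.mem_mul.2
      ⟨ρ⁻¹ * ρ', mul_mem (inv_mem hρ) hρ', κ, hκ, by rw [mul_assoc, h, inv_mul_cancel_left]⟩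

theorem coeff_cSym_mul_col {κ : Perm (Fin n)} (hκ : κ ∈ C) (g : Perm (Fin n)) :
    (cSym μ T).coeff (g * κ) = ((Perm.sign κ : ℤ) : ℂ) * (cSym μ T).coeff g := by
  by_cases hg : g ∈ (R : Set (Perm (Fin n))) * C
  · obtain ⟨ρ, hρ, κ', hκ', rfl⟩ := Set.mem_mul.1 hg
    rw [mul_assoc, coeff_cSym_mul μ T hρ (mul_mem hκ' hκ), coeff_cSym_mul μ T hρ hκ']
    simp [mul_comm]
  · rw [coeff_cSym_eq_zero μ T hg, mul_zero]
    refine coeff_cSym_eq_zero μ T fun h => hg ?_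
    obtain ⟨ρ, hρ, κ', hκ', h⟩ := Set.mem_mul.1 h
    exact Set.mem_mul.2
      ⟨ρ, hρ, κ' * κ⁻¹, mul_mem hκ' (inv_mem hκ), by rw [← mul_assoc, h, mul_inv_cancel_right]⟩

theorem rowOf_eq_or_colOf_eq_of_swap_mem {p k : Fin n}
    (h : swap p k ∈ (R : Set (Perm (Fin n))) * C) :
    rowOf μ T p = rowOf μ T k ∨ colOf μ T p = colOf μ T k := by
  obtain ⟨ρ, hρ, κ, hκ, h⟩ := Set.mem_mul.1 h
  have hκ_eq : κ = ρ⁻¹ * swap p k := eq_inv_mul_of_mul_eq h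
  have hfix : ∀ x, x ≠ p → x ≠ k → κ x = x := fun x hxp hxk =>
    eq_of_rowOf_eq_of_colOf_eq μ T
      (by rw [hκ_eq, Perm.mul_apply, swap_apply_of_ne_of_ne hxp hxk]; exact (inv_mem hρ) x) (hκ x)
  have hκp : κ p = p ∨ κ p = k := by
    by_contra! hne
    exact hne.1 (κ.injective (hfix _ hne.1 hne.2))
  have hrow : rowOf μ T (κ p) = rowOf μ T k := by
    rw [hκ_eq, Perm.mul_apply, swap_apply_left]; exact (inv_mem hρ) k
  rcases hκp with hp | hp
  · exact .inl (hp ▸ hrow)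
  · exact .inr (hp ▸ (hκ p).symm)

theorem coeff_cSym_swap {p k : Fin n} (hne : p ≠ k) :
    (cSym μ T).coeff (swap p k) =
      (if rowOf μ T k = rowOf μ T p then 1 else 0) -
        (if colOf μ T k = colOf μ T p then 1 else 0) := by
  by_cases hr : rowOf μ T k = rowOf μ T p
  · have hc : colOf μ T k ≠ colOf μ T p := fun hc => hne (eq_of_rowOf_eq_of_colOf_eq μ T hr hc).symm
    have := coeff_cSym_mul μ T (swap_mem_preservingPerms hr.symm) (one_mem C)
    simp_all
  by_cases hc : colOf μ T k = colOf μ T p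
  · have := coeff_cSym_mul μ T (one_mem R) (swap_mem_preservingPerms hc.symm)
    simp_all [Perm.sign_swap hne]
  · rw [if_neg hr, if_neg hc, sub_zero]
    refine coeff_cSym_eq_zero μ T fun h => ?_
    rcases rowOf_eq_or_colOf_eq_of_swap_mem μ T h with h | h
    exacts [hr h.symm, hc h.symm]

theorem card_filter_symm_apply (P : ℕ × ℕ → Prop) [DecidablePred P] :
    #{k | P (T.symm k)} = #{x ∈ μ.cells | P x} := by
  refine card_bij (fun k _ => (T.symm k : ℕ × ℕ)) ?_ ?_ ?_
  · intro k hk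
    exact mem_filter.2 ⟨(T.symm k).2, (mem_filter.1 hk).2⟩
  · intro k _ k' _ h
    exact T.symm.injective (Subtype.ext h)
  · intro x hx
    obtain ⟨hxμ, hPx⟩ := mem_filter.1 hx
    exact ⟨T ⟨x, hxμ⟩, by simpa using hPx, by simp⟩

theorem card_filter_rowOf (i : ℕ) : #{k | rowOf μ T k = i} = μ.rowLen i := by
  rw [μ.rowLen_eq_card, YoungDiagram.row, ← card_filter_symm_apply]
  rfl

theorem card_filter_colOf (j : ℕ) : #{k | colOf μ T k = j} = μ.colLen j := by
  rw [μ.colLen_eq_card, YoungDiagram.col, ← card_filter_symm_apply]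
  rfl

theorem sum_coeff_cSym_swap (p : Fin n) :
    ∑ k ∈ univ.filter (· ≠ p), (cSym μ T).coeff (swap p k) =
      (μ.rowLen (rowOf μ T p) : ℂ) - μ.colLen (colOf μ T p) := by
  rw [sum_congr rfl fun k hk => coeff_cSym_swap μ T (mem_filter.1 hk).2.symm,
    sum_filter_of_ne, sum_sub_distrib, sum_boole, sum_boole,
    card_filter_rowOf, card_filter_colOf]
  rintro k - h rfl
  simp at h

theorem ga_mul_cSym {ρ : Perm (Fin n)} (hρ : ρ ∈ R) : ga ρ * cSym μ T = cSym μ T :=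
  MonoidAlgebra.coeff_injective <| Finsupp.ext fun g => by
    rw [coeff_ga_mul, coeff_cSym_row_mul μ T (inv_mem hρ)]

theorem coeff_cSym_one : (cSym μ T).coeff 1 = 1 := by
  simpa using coeff_cSym_mul μ T (one_mem R) (one_mem C)

theorem coeff_transpSum_mul_cSym_one (p : Fin n) :
    (transpSum p * cSym μ T).coeff 1 = (μ.rowLen (rowOf μ T p) : ℂ) - μ.colLen (colOf μ T p) := by
  simp only [coeff_transpSum_mul, mul_one, sum_coeff_cSym_swap]

theorem coeff_transpSum_mul_cSym_mul {ρ κ : Perm (Fin n)} (hρ : ρ ∈ R) (hκ : κ ∈ C)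
    (p : Fin n) : (transpSum p * cSym μ T).coeff (ρ * κ) =
      ((Perm.sign κ : ℤ) : ℂ) * (transpSum (ρ⁻¹ p) * cSym μ T).coeff 1 := by
  rw [← ga_mul_cSym μ T hρ, ← mul_assoc, transpSum_mul_ga, mul_assoc, coeff_ga_mul,
    inv_mul_cancel_left, ga_mul_cSym μ T hρ, coeff_transpSum_mul, coeff_transpSum_mul,
    mul_sum]
  simp only [mul_one, coeff_cSym_mul_col μ T hκ]

/-- Reindexing by `k ↦ τ k` pairs the terms `swap p k * g` and `swap p (τ k) * g` with
opposite signs. -/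
theorem coeff_transpSum_mul_cSym_eq_zero {p : Fin n} {g τ : Perm (Fin n)} (hτ : τ ∈ R)
    (hτp : τ p = p) (hconj : g⁻¹ * τ * g ∈ C) (hsign : Perm.sign τ = -1) :
    (transpSum p * cSym μ T).coeff g = 0 := by
  have hterm (k : Fin n) : (cSym μ T).coeff (swap p (τ k) * g) =
      -(cSym μ T).coeff (swap p k * g) := by
    have : swap p (τ k) * g = τ * ((swap p k * g) * (g⁻¹ * τ * g)⁻¹) := by
      rw [← hτp, swap_apply_apply, hτp]; group
    rw [this, coeff_cSym_row_mul μ T hτ, coeff_cSym_mul_col μ T (inv_mem hconj)]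
    simp [hsign]
  rw [coeff_transpSum_mul, ← self_eq_neg, ← sum_neg_distrib]
  refine sum_equiv τ (fun k => ?_) fun k _ => by rw [hterm, neg_neg]
  simp only [mem_filter, mem_univ, true_and]
  nth_rw 2 [← hτp]
  exact τ.injective.ne_iff.symm

theorem mem_row_mul_col_of_injective {g : Perm (Fin n)}
    (hmem : ∀ k, (rowOf μ T k, colOf μ T (g⁻¹ k)) ∈ μ)
    (hinj : Function.Injective fun k => (rowOf μ T k, colOf μ T (g⁻¹ k))) :
    g ∈ (R : Set (Perm (Fin n))) * C := by
  let f : Fin n → Fin n := fun k => T ⟨_, (μ.mem_cells _).2 (hmem k)⟩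
  have hf : f.Injective := fun k k' h => hinj (by simpa [f] using h)
  let ρ := Equiv.ofBijective f (Finite.injective_iff_bijective.1 hf)
  have hρ : ρ ∈ R := fun k => by simp [ρ, f, rowOf]
  refine Set.mem_mul.2 ⟨ρ⁻¹, inv_mem hρ, ρ * g, fun k => ?_, inv_mul_cancel_left _ _⟩
  simp [ρ, f, colOf]

variable {μ} in
theorem exists_odd_mem_row_conj_mem_col {a b : ℕ} (hμ : μ.IsRectangle a b) (p : Fin n)
    {g : Perm (Fin n)} (hg : g ∉ (R : Set (Perm (Fin n))) * C) :
    ∃ τ ∈ R, τ p = p ∧ g⁻¹ * τ * g ∈ C ∧ Perm.sign τ = -1 := by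
  have hcell (k : Fin n) := (hμ _).1 (rowOf_colOf_mem μ T k)
  have hrow (i : ℕ) (hi : i < a) : #{k | rowOf μ T k = i} = b := by
    rw [card_filter_rowOf, hμ.rowLen_eq hi]
  have hcol (j : ℕ) (hj : j < b) : #{k | colOf μ T (g⁻¹ k) = j} = a := by
    rw [← hμ.colLen_eq hj, ← card_filter_colOf μ T]
    exact card_equiv g⁻¹ (by simp)
  obtain ⟨u, hu, v, hv, hne, hr, hc⟩ : ∃ u ≠ p, ∃ v ≠ p, u ≠ v ∧
      rowOf μ T u = rowOf μ T v ∧ colOf μ T (g⁻¹ u) = colOf μ T (g⁻¹ v) := by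
    by_contra! h
    refine hg (mem_row_mul_col_of_injective μ T (fun k => (hμ _).2 ⟨(hcell k).1, (hcell _).2⟩)
      (injective_pair_of_injOn_compl_singleton (p := p) (fun k => (hcell k).1) hrow hcol
        fun u hu v hv huv => ?_))
    obtain ⟨hr, hc⟩ := Prod.ext_iff.1 huv
    by_contra hne
    exact h u hu v hv hne hr hc
  have hconj : g⁻¹ * swap u v * g = swap (g⁻¹ u) (g⁻¹ v) := by rw [swap_apply_apply, inv_inv]
  exact ⟨swap u v, swap_mem_preservingPerms hr, swap_apply_of_ne_of_ne hu.symm hv.symm,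
    hconj ▸ swap_mem_preservingPerms hc, Perm.sign_swap hne⟩

variable {μ} in
theorem transpSum_mul_cSym_of_isRectangle {a b : ℕ} (hμ : μ.IsRectangle a b) (p : Fin n) :
    transpSum p * cSym μ T = ((b : ℂ) - a) • cSym μ T := by
  refine MonoidAlgebra.coeff_injective (Finsupp.ext fun g => ?_)
  rw [MonoidAlgebra.coeff_smul_apply, smul_eq_mul]
  by_cases hg : g ∈ (R : Set (Perm (Fin n))) * C
  · obtain ⟨ρ, hρ, κ, hκ, rfl⟩ := Set.mem_mul.1 hg
    have hcell := (hμ _).1 (rowOf_colOf_mem μ T (ρ⁻¹ p))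
    rw [coeff_transpSum_mul_cSym_mul μ T hρ hκ, coeff_transpSum_mul_cSym_one,
      coeff_cSym_mul μ T hρ hκ, hμ.rowLen_eq hcell.1, hμ.colLen_eq hcell.2, mul_comm]
  · obtain ⟨τ, hτ, hτp, hconj, hsign⟩ := exists_odd_mem_row_conj_mem_col T hμ p hg
    rw [coeff_transpSum_mul_cSym_eq_zero μ T hτ hτp hconj hsign, coeff_cSym_eq_zero μ T hg,
      mul_zero]

theorem isRectangle_of_transpSum_mul_cSym_eq {z : ℂ}
    (h : ∀ p, transpSum p * cSym μ T = z • cSym μ T) :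
    μ.IsRectangle (μ.colLen 0) (μ.rowLen 0) := by
  have hcell (x : ℕ × ℕ) (hx : x ∈ μ) : (μ.rowLen x.1 : ℂ) - μ.colLen x.2 = z := by
    have := congrArg (fun y => y.coeff 1) (h (T ⟨x, (μ.mem_cells _).2 hx⟩))
    simpa [coeff_transpSum_mul_cSym_one, coeff_cSym_one, rowOf, colOf] using this
  refine YoungDiagram.isRectangle_of_rowLen_eq fun i hi => ?_
  have hi0 : (i, 0) ∈ μ := YoungDiagram.mem_iff_lt_colLen.2 hi
  have h00 : (0, 0) ∈ μ := μ.up_left_mem (Nat.zero_le i) le_rfl hi0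
  exact_mod_cast sub_left_inj.1 ((hcell _ hi0).trans (hcell _ h00).symm)

end Tableau

end YoungSymmetrizer

theorem stmt0_general (n : ℕ) [NeZero n] (μ : YoungDiagram)
    (T : {x : ℕ × ℕ // x ∈ μ.cells} ≃ Fin n) :
    ((∃ z : ℂ, ∀ y : GA n, JM n * (y * cSym μ T) = z • (y * cSym μ T)) ↔
      (∃ a b : ℕ, ∀ x : ℕ × ℕ, x ∈ μ ↔ x.1 < a ∧ x.2 < b)) ∧
    (∀ a b : ℕ, (∀ x : ℕ × ℕ, x ∈ μ ↔ x.1 < a ∧ x.2 < b) →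
      ∀ y : GA n, JM n * (y * cSym μ T) = ((b : ℂ) - (a : ℂ)) • (y * cSym μ T)) := by
  have hrect (a b : ℕ) (hμ : μ.IsRectangle a b) :=
    (YoungSymmetrizer.JM_mul_left_ideal_iff _ _).2
      (YoungSymmetrizer.transpSum_mul_cSym_of_isRectangle T hμ)
  refine ⟨⟨fun ⟨z, hz⟩ => ?_, fun ⟨a, b, hμ⟩ => ⟨_, hrect a b hμ⟩⟩, hrect⟩
  exact ⟨_, _, YoungSymmetrizer.isRectangle_of_transpSum_mul_cSym_eq μ T
    ((YoungSymmetrizer.JM_mul_left_ideal_iff _ _).1 hz)⟩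

/-- `C = s₁₂ + ⋯ + s₁ₙ` acts as a scalar on the irreducible representation
`π_μ` (realized as the left ideal generated by the Young symmetrizer `c_μ`) if and only if
the Young diagram `μ` is a rectangle; and on a rectangle of height `a` and width `b` the
scalar is `b - a`. -/
theorem stmt0 (n : ℕ) [NeZero n] (μ : YoungDiagram) (hcard : μ.card = n)
    (T : {x : ℕ × ℕ // x ∈ μ.cells} ≃ Fin n) :
    ((∃ z : ℂ, ∀ y : GA n, JM n * (y * cSym μ T) = z • (y * cSym μ T)) ↔
      (∃ a b : ℕ, ∀ x : ℕ × ℕ, x ∈ μ ↔ x.1 < a ∧ x.2 < b)) ∧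
    (∀ a b : ℕ, (∀ x : ℕ × ℕ, x ∈ μ ↔ x.1 < a ∧ x.2 < b) →
      ∀ y : GA n, JM n * (y * cSym μ T) = ((b : ℂ) - (a : ℂ)) • (y * cSym μ T)) :=
  stmt0_general n μ T

end
end

section
/- For $\lambda, \nu \in \mathbb{C}$, the element $\lambda + \nu(s_{12} + s_{13} + \cdots + s_{1r})$ is invertible in the group algebra $\mathbb{C}[S_r]$ for all $r \in \{1, \ldots, n\}$ if and only if $\lambda + p\nu \neq 0$ and $\lambda - p\nu \neq 0$ for every integer $p$ with $0 \le p \le n-1$. -/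
/-!
Write `X_{S,b} = ∑_{c ∈ S \ {b}} (b c)` in `ℂ[Perm α]`. The trivial and sign characters send
`λ + ν X_{S,b}` to `λ ± (|S| - 1) ν`, which gives one direction. For the other, it suffices that
every eigenvalue `μ` of left multiplication by `X = X_{S,b}` is an integer `p` with `|p| < |S|`;
this goes by induction on `S`, in the manner of Okounkov–Vershik. For `a ∈ S \ {b}`, `s = (a b)`
and `Y = X_{S \ {b}, a}` we have `s² = 1`, `X = s Y s + s` and `XY = YX`. Take a common
eigenvector `Xu = μu`, `Yu = βu`; then `β` is such an integer and `Y (s u) = μ (s u) - u`.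
Since `Y` is self-adjoint for the standard inner product, this forces `μ ≠ β`. Then either
`s u - (μ - β)⁻¹ u` is an eigenvector of `Y` for `μ`, or `s u = (μ - β)⁻¹ u` and `s² = 1` gives
`μ = β ± 1`.
-/

open MonoidAlgebra Equiv Finset
open scoped InnerProductSpace

theorem isUnit_of_forall_mul_eq_zero {K A : Type*} [Field K] [Ring A] [Algebra K A]
    [FiniteDimensional K A] {a : A} (h : ∀ v, a * v = 0 → v = 0) : IsUnit a := by
  rw [← Algebra.lmul_isUnit_iff (R := K), LinearMap.isUnit_iff_ker_eq_bot, LinearMap.ker_eq_bot']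
  exact h

theorem Module.End.exists_eigenvector_of_commute {K V : Type*} [Field K] [IsAlgClosed K]
    [AddCommGroup V] [Module K V] [FiniteDimensional K V] {f g : End K V} (hfg : Commute f g)
    {μ : K} (hμ : f.HasEigenvalue μ) :
    ∃ β : K, ∃ u : V, u ≠ 0 ∧ f u = μ • u ∧ g u = β • u := by
  have : Nontrivial (f.eigenspace μ) := Submodule.nontrivial_iff_ne_bot.2 hμ
  obtain ⟨β, hβ⟩ := exists_eigenvalue (g.restrict (mapsTo_genEigenspace_of_comm hfg μ 1))
  obtain ⟨⟨u, hu⟩, hgu, hu0⟩ := hβ.exists_hasEigenvector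
  exact ⟨β, u, by simpa using hu0, mem_eigenspace_iff.1 hu,
    congrArg Subtype.val (mem_eigenspace_iff.1 hgu)⟩

theorem LinearMap.IsSymmetric.eq_zero_of_apply_eq_smul_sub {𝕜 E : Type*} [RCLike 𝕜]
    [NormedAddCommGroup E] [InnerProductSpace 𝕜 E] {T : E →ₗ[𝕜] E} (hT : T.IsSymmetric)
    {β : 𝕜} {u w : E} (hu : T u = β • u) (hw : T w = β • w - u) : u = 0 := by
  by_contra hu0
  have hβ : starRingEnd 𝕜 β = β :=
    hT.conj_eigenvalue_eq_self (Module.End.hasEigenvalue_of_hasEigenvector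
      ⟨Module.End.mem_eigenspace_iff.2 hu, hu0⟩)
  have h := hT u w
  rw [hu, hw, inner_smul_left, inner_sub_right, inner_smul_right, hβ] at h
  exact hu0 (inner_self_eq_zero.1 (by linear_combination h))

section Ladder

variable {K A : Type*} [Field K] [Ring A] [Algebra K A] {s X Y u : A} {μ β : K}

theorem mul_mul_eq_smul_sub (hs : s * s = 1) (hX : X = s * Y * s + s) (hXu : X * u = μ • u) :
    Y * (s * u) = μ • (s * u) - u := by
  have hsX : s * X = Y * s + 1 := by rw [hX, mul_add, ← mul_assoc, ← mul_assoc, hs, one_mul]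
  rw [← mul_assoc, eq_sub_of_add_eq hsX.symm, sub_mul, one_mul, mul_assoc, hXu, mul_smul_comm]

theorem eq_add_one_or_eq_sub_one_or_exists_mul_eq_smul (hs : s * s = 1)
    (hX : X = s * Y * s + s) (hu : u ≠ 0) (hXu : X * u = μ • u) (hYu : Y * u = β • u)
    (hμβ : μ ≠ β) : μ = β + 1 ∨ μ = β - 1 ∨ ∃ u', u' ≠ 0 ∧ Y * u' = μ • u' := by
  have hYw := mul_mul_eq_smul_sub hs hX hXu
  have hμβ' : μ - β ≠ 0 := sub_ne_zero.2 hμβ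
  by_cases hw : s * u = (μ - β)⁻¹ • u
  · have htt : (μ - β)⁻¹ * (μ - β)⁻¹ = 1 := by
      refine smul_left_injective K hu ?_
      calc ((μ - β)⁻¹ * (μ - β)⁻¹) • u = (μ - β)⁻¹ • (s * u) := by rw [mul_smul, hw]
        _ = s * (s * u) := by rw [hw, mul_smul_comm, hw]
        _ = (1 : K) • u := by rw [← mul_assoc, hs, one_mul, one_smul]
    rcases mul_self_eq_one_iff.1 htt with h | h
    · exact Or.inl (by linear_combination inv_mul_cancel₀ hμβ' - (μ - β) * h)
    · exact Or.inr (Or.inl (by linear_combination (μ - β) * h - inv_mul_cancel₀ hμβ'))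
  · refine Or.inr (Or.inr ⟨s * u - (μ - β)⁻¹ • u, sub_ne_zero.2 hw, ?_⟩)
    rw [mul_sub, hYw, mul_smul_comm, hYu]
    match_scalars <;> field_simp
    ring

end Ladder

section TranspositionSum

variable (k : Type*) [Semiring k] {α : Type*} [DecidableEq α]

noncomputable def transpositionSum (S : Finset α) (b : α) : MonoidAlgebra k (Perm α) :=
  ∑ c ∈ S.erase b, of k (Perm α) (swap b c)

variable {k}

theorem of_swap_mul_self (a b : α) : of k (Perm α) (swap a b) * of k (Perm α) (swap a b) = 1 := by
  rw [← map_mul, swap_mul_self, map_one]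

theorem of_mul_of_swap (σ : Perm α) (a b : α) :
    of k (Perm α) σ * of k (Perm α) (swap a b) =
      of k (Perm α) (swap (σ a) (σ b)) * of k (Perm α) σ := by
  rw [← map_mul, ← map_mul, swap_apply_apply, inv_mul_cancel_right]

theorem commute_of_transpositionSum {σ : Perm α} {S : Finset α} {b : α} (hσb : σ b = b)
    (hσS : ∀ x, σ x ∈ S ↔ x ∈ S) : Commute (of k (Perm α) σ) (transpositionSum k S b) := by
  simp only [Commute, SemiconjBy, transpositionSum, mul_sum, sum_mul, of_mul_of_swap, hσb]
  refine sum_equiv σ (fun c => ?_) fun _ _ => rfl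
  rw [mem_erase, mem_erase, hσS, ← hσb, σ.injective.ne_iff, hσb]

theorem commute_transpositionSum_erase {S : Finset α} {a b : α} (ha : a ∈ S) (hab : a ≠ b) :
    Commute (transpositionSum k S b) (transpositionSum k (S.erase b) a) := by
  refine Commute.sum_right _ _ _ fun c hc => (commute_of_transpositionSum ?_ fun x => ?_).symm
  · obtain ⟨-, hcb, -⟩ := mem_erase.1 hc |>.imp_right mem_erase.1
    exact swap_apply_of_ne_of_ne hab.symm hcb.symm
  · have hc' := (mem_erase.1 (mem_of_mem_erase hc)).2
    rw [swap_apply_def]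
    split_ifs <;> simp_all

theorem transpositionSum_eq_of_swap_mul_mul_add {S : Finset α} {a b : α} (ha : a ∈ S)
    (hab : a ≠ b) :
    transpositionSum k S b = of k (Perm α) (swap a b) * transpositionSum k (S.erase b) a *
      of k (Perm α) (swap a b) + of k (Perm α) (swap a b) := by
  rw [transpositionSum, transpositionSum, mul_sum, sum_mul,
    ← add_sum_erase _ _ (mem_erase.2 ⟨hab, ha⟩), add_comm, swap_comm b a]
  congr 1
  refine sum_congr rfl fun c hc => ?_
  obtain ⟨hca, hcb, -⟩ := mem_erase.1 hc |>.imp_right mem_erase.1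
  rw [of_mul_of_swap, swap_apply_left, swap_apply_of_ne_of_ne hca hcb, mul_assoc,
    of_swap_mul_self, mul_one]

end TranspositionSum

noncomputable def MonoidAlgebra.euclideanEquiv (G : Type*) [Fintype G] :
    MonoidAlgebra ℂ G ≃ₗ[ℂ] EuclideanSpace ℂ G :=
  (coeffLinearEquiv ℂ).trans
    ((Finsupp.linearEquivFunOnFinite ℂ ℂ G).trans (WithLp.linearEquiv 2 ℂ (G → ℂ)).symm)

@[simp]
theorem MonoidAlgebra.euclideanEquiv_apply {G : Type*} [Fintype G] (x : MonoidAlgebra ℂ G)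
    (g : G) :
    euclideanEquiv G x g = x.coeff g := rfl

theorem MonoidAlgebra.inner_euclideanEquiv_of_mul {G : Type*} [Group G] [Fintype G] (g : G)
    (x y : MonoidAlgebra ℂ G) :
    ⟪euclideanEquiv G (of ℂ G g * x), euclideanEquiv G y⟫_ℂ =
      ⟪euclideanEquiv G x, euclideanEquiv G (of ℂ G g⁻¹ * y)⟫_ℂ := by
  simp only [PiLp.inner_apply, euclideanEquiv_apply, of_apply, coeff_single_mul_apply, one_mul,
    inv_inv]
  exact Fintype.sum_equiv (Equiv.mulLeft g⁻¹) _ _ fun h => by simp [Equiv.coe_mulLeft]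

section Spectrum

variable {α : Type*} [DecidableEq α] [Fintype α]

theorem isSymmetric_conj_lmul_transpositionSum (S : Finset α) (b : α) :
    ((euclideanEquiv (Perm α)).conj (Algebra.lmul ℂ _ (transpositionSum ℂ S b))).IsSymmetric := by
  intro x y
  obtain ⟨x, rfl⟩ := (euclideanEquiv (Perm α)).surjective x
  obtain ⟨y, rfl⟩ := (euclideanEquiv (Perm α)).surjective y
  simp only [LinearEquiv.conj_apply, LinearMap.comp_apply, LinearEquiv.coe_coe,
    LinearEquiv.symm_apply_apply, Algebra.coe_lmul_eq_mul, LinearMap.mul_apply']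
  simp only [transpositionSum, sum_mul, map_sum, sum_inner, inner_sum,
    inner_euclideanEquiv_of_mul, swap_inv]

theorem eq_zero_of_transpositionSum_mul_eq_smul_sub {S : Finset α} {b : α} {β : ℂ}
    {u w : MonoidAlgebra ℂ (Perm α)} (hu : transpositionSum ℂ S b * u = β • u)
    (hw : transpositionSum ℂ S b * w = β • w - u) : u = 0 := by
  have := (isSymmetric_conj_lmul_transpositionSum S b).eq_zero_of_apply_eq_smul_sub
    (u := euclideanEquiv _ u) (w := euclideanEquiv _ w) (β := β)
    (by simp [hu]) (by simp [hw])
  simpa using this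

theorem exists_int_eq_of_transpositionSum_mul_eq_smul {S : Finset α} {b : α} (hb : b ∈ S)
    {μ : ℂ} {v : MonoidAlgebra ℂ (Perm α)} (hv : v ≠ 0)
    (h : transpositionSum ℂ S b * v = μ • v) : ∃ p : ℤ, p.natAbs < #S ∧ μ = p := by
  induction S using Finset.strongInduction generalizing b μ v with
  | H S ih =>
  obtain hS | ⟨a, ha⟩ := (S.erase b).eq_empty_or_nonempty
  · rw [transpositionSum, hS, sum_empty, zero_mul, eq_comm, smul_eq_zero] at h
    exact ⟨0, card_pos.2 ⟨b, hb⟩, by simpa [hv] using h⟩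
  obtain ⟨hab, haS⟩ := mem_erase.1 ha
  have hcard : #(S.erase b) = #S - 1 := card_erase_of_mem hb
  set X := transpositionSum ℂ S b
  set Y := transpositionSum ℂ (S.erase b) a
  set s := of ℂ (Perm α) (swap a b)
  obtain ⟨β, u, hu, hXu, hYu⟩ := Module.End.exists_eigenvector_of_commute
    ((commute_transpositionSum_erase haS hab).map (Algebra.lmul ℂ _))
    (Module.End.hasEigenvalue_of_hasEigenvector ⟨Module.End.mem_eigenspace_iff.2 h, hv⟩)
  simp only [Algebra.coe_lmul_eq_mul, LinearMap.mul_apply'] at hXu hYu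
  obtain ⟨q, hq, rfl⟩ := ih _ (erase_ssubset hb) ha hu hYu
  have hs : s * s = 1 := of_swap_mul_self a b
  have hX : X = s * Y * s + s := transpositionSum_eq_of_swap_mul_mul_add haS hab
  have hμq : μ ≠ q := by
    rintro rfl
    exact hu (eq_zero_of_transpositionSum_mul_eq_smul_sub hYu (mul_mul_eq_smul_sub hs hX hXu))
  rcases eq_add_one_or_eq_sub_one_or_exists_mul_eq_smul hs hX hu hXu hYu hμq with
    hμ | hμ | ⟨u', hu', hYu'⟩
  · exact ⟨q + 1, by omega, by simp [hμ]⟩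
  · exact ⟨q - 1, by omega, by simp [hμ]⟩
  · obtain ⟨p, hp, hμp⟩ := ih _ (erase_ssubset hb) ha hu' hYu'
    exact ⟨p, by omega, hμp⟩

theorem isUnit_smul_one_add_smul_transpositionSum {S : Finset α} {b : α} (hb : b ∈ S)
    {lam nu : ℂ} (h : ∀ p : ℕ, p < #S → lam + p * nu ≠ 0 ∧ lam - p * nu ≠ 0) :
    IsUnit (lam • 1 + nu • transpositionSum ℂ S b) := by
  refine isUnit_of_forall_mul_eq_zero (K := ℂ) fun v hv => ?_
  by_contra hv0
  rw [add_mul, smul_mul_assoc, smul_mul_assoc, one_mul] at hv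
  by_cases hnu : nu = 0
  · rw [hnu, zero_smul, add_zero, smul_eq_zero] at hv
    exact (h 0 (card_pos.2 ⟨b, hb⟩)).1 (by simpa using hv.resolve_right hv0)
  have hX : transpositionSum ℂ S b * v = (-lam / nu) • v := by
    rw [div_eq_mul_inv, mul_comm, ← smul_smul, neg_smul, ← eq_neg_of_add_eq_zero_right hv,
      smul_smul, inv_mul_cancel₀ hnu, one_smul]
  obtain ⟨p, hp, hμ⟩ := exists_int_eq_of_transpositionSum_mul_eq_smul hb hv0 hX
  have hlam : lam + p * nu = 0 := by
    rw [div_eq_iff hnu] at hμ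
    linear_combination -hμ
  obtain ⟨m, rfl | rfl⟩ := Int.eq_nat_or_neg p
  · exact (h m (by simpa using hp)).1 (by simpa using hlam)
  · exact (h m (by simpa using hp)).2 (by push_cast at hlam; linear_combination hlam)

end Spectrum

theorem add_mul_ne_zero_and_sub_mul_ne_zero_of_isUnit {k α : Type*} [CommRing k] [Nontrivial k]
    [DecidableEq α] [Fintype α] {S : Finset α} {b : α} {lam nu : k}
    (h : IsUnit (lam • 1 + nu • transpositionSum k S b)) :
    lam + #(S.erase b) * nu ≠ 0 ∧ lam - #(S.erase b) * nu ≠ 0 := by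
  constructor
  · have := (h.map (lift k k (Perm α) 1)).ne_zero
    simpa [transpositionSum, mul_comm] using this
  · have := (h.map (lift k k (Perm α) ((Int.castRingHom k).toMonoidHom.comp
      ((Units.coeHom ℤ).comp Perm.sign)))).ne_zero
    simp only [transpositionSum, map_add, map_smul, map_one, map_sum, lift_of] at this
    rw [sum_congr rfl (g := fun _ => -1) fun c hc => by
      simp [Perm.sign_swap (mem_erase.1 hc).1.symm]] at this
    simpa [mul_comm, sub_eq_add_neg] using this

theorem stmt2_general (n : ℕ) (lam nu : ℂ) :
    (∀ r : ℕ, (hr : 1 ≤ r) → r ≤ n →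
      IsUnit (lam • (1 : MonoidAlgebra ℂ (Equiv.Perm (Fin r))) +
        nu • ∑ m ∈ Finset.univ.filter (fun m : Fin r => m ≠ ⟨0, hr⟩),
          MonoidAlgebra.of ℂ (Equiv.Perm (Fin r)) (Equiv.swap ⟨0, hr⟩ m)))
    ↔ (∀ p : ℕ, p < n → lam + (p : ℂ) * nu ≠ 0 ∧ lam - (p : ℂ) * nu ≠ 0) := by
  simp only [filter_ne']
  refine ⟨fun H p hp => ?_, fun H r hr hrn => ?_⟩
  · simpa using add_mul_ne_zero_and_sub_mul_ne_zero_of_isUnit (H (p + 1) (by omega) hp)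
  · exact isUnit_smul_one_add_smul_transpositionSum (mem_univ _)
      fun p hp => H p (by simp at hp; omega)

/-- `λ + ν(s₁₂ + ⋯ + s₁ᵣ)` is invertible in `ℂ[S_r]` for all `r ∈ {1,…,n}`
iff `λ ± pν ≠ 0` for all `0 ≤ p ≤ n-1`. -/
theorem stmt2 (n : ℕ) (hn : 1 ≤ n) (lam nu : ℂ) :
    (∀ r : ℕ, (hr : 1 ≤ r) → r ≤ n →
      IsUnit (lam • (1 : MonoidAlgebra ℂ (Equiv.Perm (Fin r))) +
        nu • ∑ m ∈ Finset.univ.filter (fun m : Fin r => m ≠ ⟨0, hr⟩),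
          MonoidAlgebra.of ℂ (Equiv.Perm (Fin r)) (Equiv.swap ⟨0, hr⟩ m)))
    ↔ (∀ p : ℕ, p < n → lam + (p : ℂ) * nu ≠ 0 ∧ lam - (p : ℂ) * nu ≠ 0) :=
  stmt2_general n lam nu
end

section
/- In the group algebra of the symmetric group $S_n$, for distinct indices $\ell, m$ and a finite subset $\Delta \subseteq \{1,\ldots,n\}$ with $\ell, m \notin \Delta$, the following identity holds: $\big(\sum_{p \in \Delta \cup \{m\}} s_{p\ell}\big)\big(\sum_{q \in \Delta} s_{qm}\big) = \big(\sum_{p \in \Delta \cup \{\ell\}} s_{pm}\big)\big(\sum_{q \in \Delta} s_{q\ell}\big)$. -/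
open Equiv

lemma swap_aux {α} [DecidableEq α] {a b c : α} (hab : a ≠ b) (hac : a ≠ c) (hbc : b ≠ c) :
    swap a b * swap c a = swap c a * swap c b := by
  ext x
  simp only [Perm.mul_apply, swap_apply_def]
  split_ifs <;> simp_all

lemma swap_comm_disj {α} [DecidableEq α] {a b c d : α} (hac : a ≠ c) (had : a ≠ d)
    (hbc : b ≠ c) (hbd : b ≠ d) : swap a b * swap c d = swap c d * swap a b := by
  ext x
  simp only [Perm.mul_apply, swap_apply_def]
  split_ifs <;> simp_all

/-- the group-algebra identity
`(∑_{p ∈ Δ ∪ {m}} s_{pℓ})(∑_{q ∈ Δ} s_{qm}) = (∑_{p ∈ Δ ∪ {ℓ}} s_{pm})(∑_{q ∈ Δ} s_{qℓ})`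
for distinct `ℓ, m ∉ Δ`. -/
theorem stmt3 (n : ℕ) (Δ : Finset (Fin n)) (l m : Fin n)
    (hl : l ∉ Δ) (hm : m ∉ Δ) (hlm : l ≠ m) :
    (∑ p ∈ insert m Δ, MonoidAlgebra.of ℂ (Perm (Fin n)) (swap p l)) *
      (∑ q ∈ Δ, MonoidAlgebra.of ℂ (Perm (Fin n)) (swap q m)) =
    (∑ p ∈ insert l Δ, MonoidAlgebra.of ℂ (Perm (Fin n)) (swap p m)) *
      (∑ q ∈ Δ, MonoidAlgebra.of ℂ (Perm (Fin n)) (swap q l)) := by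
  rw [Finset.sum_mul_sum, Finset.sum_mul_sum, ← Finset.sum_product', ← Finset.sum_product']
  refine Finset.sum_nbij'
    (fun pq => if pq.1 = m then (pq.2, pq.2) else if pq.1 = pq.2 then (l, pq.2) else (pq.2, pq.1))
    (fun pq => if pq.1 = l then (pq.2, pq.2) else if pq.1 = pq.2 then (m, pq.2) else (pq.2, pq.1))
    ?_ ?_ ?_ ?_ ?_
  · rintro ⟨p, q⟩ hpq
    simp only [Finset.mem_product, Finset.mem_insert] at hpq ⊢
    obtain ⟨hp, hq⟩ := hpq
    split_ifs <;> simp_all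
  · rintro ⟨p, q⟩ hpq
    simp only [Finset.mem_product, Finset.mem_insert] at hpq ⊢
    obtain ⟨hp, hq⟩ := hpq
    split_ifs <;> simp_all
  · rintro ⟨p, q⟩ hpq
    simp only [Finset.mem_product, Finset.mem_insert] at hpq
    obtain ⟨hp, hq⟩ := hpq
    have hql : q ≠ l := fun h => hl (h ▸ hq)
    have hqm : q ≠ m := fun h => hm (h ▸ hq)
    rcases hp with hp | hp
    · simp [hp, hql, hqm]
    · have hpl : p ≠ l := fun h => hl (h ▸ hp)
      have hpm : p ≠ m := fun h => hm (h ▸ hp)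
      by_cases hpq' : p = q
      · simp [hpq', hql, hqm, hlm]
      · simp [hpm, hpq', hql, Ne.symm hpq']
  · rintro ⟨p, q⟩ hpq
    simp only [Finset.mem_product, Finset.mem_insert] at hpq
    obtain ⟨hp, hq⟩ := hpq
    have hql : q ≠ l := fun h => hl (h ▸ hq)
    have hqm : q ≠ m := fun h => hm (h ▸ hq)
    rcases hp with hp | hp
    · simp [hp, hql, hqm]
    · have hpl : p ≠ l := fun h => hl (h ▸ hp)
      have hpm : p ≠ m := fun h => hm (h ▸ hp)
      by_cases hpq' : p = q
      · simp [hpq', hql, hqm, hlm.symm]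
      · simp [hpl, hpq', hqm, Ne.symm hpq']
  · rintro ⟨p, q⟩ hpq
    simp only [Finset.mem_product, Finset.mem_insert] at hpq
    obtain ⟨hp, hq⟩ := hpq
    have hql : q ≠ l := fun h => hl (h ▸ hq)
    have hqm : q ≠ m := fun h => hm (h ▸ hq)
    rw [← map_mul, ← map_mul]
    rcases hp with hp | hp
    · subst hp
      simp only [if_pos rfl]
      congr 1
      -- swap m l * swap q m = swap q m * swap q l
      exact swap_aux hlm.symm (Ne.symm hqm) (Ne.symm hql)
    · have hpl : p ≠ l := fun h => hl (h ▸ hp)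
      have hpm : p ≠ m := fun h => hm (h ▸ hp)
      by_cases hpq' : p = q
      · subst hpq'
        simp only [if_neg hpm, if_pos rfl]
        congr 1
        -- swap p l * swap p m = swap l m * swap p l
        have := swap_aux (a := l) (b := m) (c := p) hlm (Ne.symm hpl) (Ne.symm hpm)
        -- this : swap l m * swap p l = swap p l * swap p m
        exact this.symm
      · simp only [if_neg hpm, if_neg hpq']
        congr 1
        exact swap_comm_disj hpq' hpm (Ne.symm hql) hlm
end

section
/- Let $\Bbbk$ be a commutative ring, $A$ a $\Bbbk$-algebra, and $F$ a functor on $A$-modules commuting with a quasi-inverse in the following sense: for every $A$-module $V$ and commutative $\Bbbk$-algebra $\Bbbk'$, there is a natural map $f: F(V) \otimes_\Bbbk \Bbbk' \to F(V \otimes_\Bbbk \Bbbk')$, the composite $F(F(V)) \otimes \Bbbk' \to F(F(V) \otimes \Bbbk') \to F(F(V \otimes \Bbbk'))$ equals the identity of $V \otimes \Bbbk'$ under the isomorphisms $F \circ F \cong \mathrm{Id}$, and $F$ is exact. Then $f$ is an isomorphism: $F(V) \otimes_\Bbbk \Bbbk' \cong F(V \otimes_\Bbbk \Bbbk')$. 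-/
open CategoryTheory CategoryTheory.Limits

/-- abstract base change for reflection functors.  Let `T` be a
base-change functor (`V ↦ V ⊗_𝕜 𝕜'`), `FA`, `FB` exact functors squaring to the
identity (via `ηA`, `ηB`), and `f : FA ⋙ T ⟶ T ⋙ FB` a natural base-change map
`F(V) ⊗ 𝕜' → F(V ⊗ 𝕜')` such that the composite
`F(F(V)) ⊗ 𝕜' → F(F(V) ⊗ 𝕜') → F(F(V ⊗ 𝕜'))` is the identity of `V ⊗ 𝕜'` under the
isomorphisms `F ∘ F ≅ Id`.  Then `f` is an isomorphism. -/
theorem stmt13 {𝒜 ℬ : Type*} [Category 𝒜] [Category ℬ] [Abelian 𝒜] [Abelian ℬ]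
    (FA : 𝒜 ⥤ 𝒜) (FB : ℬ ⥤ ℬ) (T : 𝒜 ⥤ ℬ)
    (ηA : FA ⋙ FA ≅ 𝟭 𝒜) (ηB : FB ⋙ FB ≅ 𝟭 ℬ)
    [PreservesFiniteLimits FB] [PreservesFiniteColimits FB]
    (f : FA ⋙ T ⟶ T ⋙ FB)
    (hcomp : ∀ V : 𝒜,
      f.app (FA.obj V) ≫ FB.map (f.app V) ≫ ηB.hom.app (T.obj V) =
        T.map (ηA.hom.app V)) :
    IsIso f := by
  haveI : FB.Faithful := Functor.Faithful.of_comp_iso ηB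
  -- the composite from hcomp is an isomorphism
  have hiso : ∀ V : 𝒜, IsIso (f.app (FA.obj V) ≫ FB.map (f.app V)) := by
    intro V
    have : f.app (FA.obj V) ≫ FB.map (f.app V) =
        T.map (ηA.hom.app V) ≫ inv (ηB.hom.app (T.obj V)) := by
      rw [← hcomp V]; simp
    rw [this]; infer_instance
  -- every component is epi
  have hepi : ∀ V : 𝒜, Epi (f.app V) := by
    intro V
    haveI := hiso V
    haveI : Epi (FB.map (f.app V)) := epi_of_epi (f.app (FA.obj V)) (FB.map (f.app V))
    exact FB.epi_of_epi_map this
  -- components at objects in the image of FA are mono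
  have hmono' : ∀ V : 𝒜, Mono (f.app (FA.obj V)) := by
    intro V
    haveI := hiso V
    exact mono_of_mono (f.app (FA.obj V)) (FB.map (f.app V))
  -- hence every component is mono, by transporting along ηA
  have hmono : ∀ V : 𝒜, Mono (f.app V) := by
    intro V
    have hnat := f.naturality (ηA.hom.app V)
    simp only [Functor.comp_obj, Functor.id_obj] at hnat
    have : f.app V =
        inv ((FA ⋙ T).map (ηA.hom.app V)) ≫ f.app (FA.obj (FA.obj V)) ≫
          (T ⋙ FB).map (ηA.hom.app V) := by
      rw [← hnat, IsIso.inv_hom_id_assoc]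
    rw [this]
    haveI := hmono' (FA.obj V)
    exact mono_comp _ _
  haveI : ∀ V : 𝒜, IsIso (f.app V) := fun V =>
    haveI := hepi V; haveI := hmono V; isIso_of_mono_of_epi _
  exact NatIso.isIso_of_isIso_app f
end
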